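/- Let Σ be a symplectic spread-set on U = V(n,q) with n odd and q even, i.e., a set of q^n self-adjoint operators containing 0 such that L + L' is invertible for all distinct L, L' ∈ Σ. Then there is a unique bijection C: U → Σ such that C(a) + E_{a,a} is skew-symmetric for all a ∈ U. Moreover C is additive if and only if Σ is closed under addition. -/

import Mathlib

/-- The rank-one operator `x ↦ b(x,a) • c`. -/
def Eop {F U : Type*} [Field F] [AddCommGroup U] [Module F U]
    (B : LinearMap.BilinForm F U) (a c : U) : U →ₗ[F] U :=
  (B.flip a).smulRight c

/-- `T` is self-adjoint with respect to `B`. -/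
def IsSelfAdjOp {F U : Type*} [Field F] [AddCommGroup U] [Module F U]
    (B : LinearMap.BilinForm F U) (T : U →ₗ[F] U) : Prop :=
  ∀ x y : U, B (T x) y = B x (T y)

/-- `T` is skew-symmetric (alternating) with respect to `B`. -/
def IsSkewOp {F U : Type*} [Field F] [AddCommGroup U] [Module F U]
    (B : LinearMap.BilinForm F U) (T : U →ₗ[F] U) : Prop :=
  ∀ x : U, B x (T x) = 0

/-!
In characteristic 2 the quadratic form `Q x = b(x, L x)` of a self-adjoint `L` is additive with
`Q (c x) = c² Q x`; since squaring is a field automorphism, `√Q` is a linear form, so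
`b(x, L x) = b(x, a)²` for a vector `a`, which says exactly that `L + E_{a,a}` is skew. If two
members `L ≠ L'` of `Σ` received the same `a`, then `L + L'` would be skew and invertible, making
`(x, y) ↦ b(x, (L + L') y)` a nondegenerate alternating form in odd dimension; but an alternating
matrix of odd size is singular. Hence `L ↦ a` is injective on `Σ`, and bijective since
`|Σ| = |U|`. Additivity comes from `b(x, a + b)² = b(x, a)² + b(x, b)²`.
-/

open Module

open Equiv Matrix in
theorem Matrix.det_eq_zero_of_transpose_eq_neg {R n : Type*} [CommRing R] [Fintype n]
    [DecidableEq n] (hn : Odd (Fintype.card n)) {M : Matrix n n R} (hM : Mᵀ = -M)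
    (hdiag : ∀ i, M i i = 0) : M.det = 0 := by
  rw [det_apply]
  -- In the Leibniz expansion the terms of `σ` and `σ⁻¹` cancel, and a self-inverse `σ` has a
  -- fixed point because the size is odd, so its term contains a diagonal entry.
  refine Finset.sum_ninvolution (fun σ => σ⁻¹) (fun σ => ?_) (fun σ hσ => ?_)
    (fun _ => Finset.mem_univ _) inv_inv
  · have hprod : ∏ i, M (σ⁻¹ i) i = -∏ i, M (σ i) i :=
      calc ∏ i, M (σ⁻¹ i) i = ∏ i, M i (σ i) := by rw [← Equiv.prod_comp σ]; simp
        _ = ∏ i, -M (σ i) i := by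
          refine Finset.prod_congr rfl fun i _ => ?_
          simpa using congrFun (congrFun hM (σ i)) i
        _ = -∏ i, M (σ i) i := by
          rw [Finset.prod_neg, Finset.card_univ, hn.neg_one_pow, neg_one_mul]
    rw [Perm.sign_inv, hprod, smul_neg, add_neg_cancel]
  · intro hinv
    have hσ2 : σ ^ 2 ^ 1 = 1 := by rw [pow_one, sq, mul_eq_one_iff_inv_eq.mpr hinv]
    obtain ⟨i, hi⟩ := Perm.exists_fixed_point_of_prime (p := 2) (n := 1)
      (by rwa [← even_iff_two_dvd, Nat.not_even_iff_odd]) hσ2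
    exact hσ (by rw [Finset.prod_eq_zero (Finset.mem_univ i) (by rw [hi, hdiag]), smul_zero])

namespace LinearMap.BilinForm

theorem even_finrank_of_isAlt {K V : Type*} [Field K] [AddCommGroup V] [Module K V]
    [FiniteDimensional K V] {B : LinearMap.BilinForm K V} (hB : B.Nondegenerate)
    (halt : B.IsAlt) : Even (finrank K V) := by
  let b := finBasis K V
  by_contra hodd
  refine (nondegenerate_iff_det_ne_zero b).mp hB
    (Matrix.det_eq_zero_of_transpose_eq_neg (by simpa using hodd) ?_
      fun i => (toMatrix_apply b B i i).trans (halt _))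
  ext i j
  simp [toMatrix_apply, ← LinearMap.IsAlt.neg halt (b i) (b j)]

variable {R M : Type*} [CommRing R] [CharP R 2] [AddCommGroup M] [Module R M]
  {B : LinearMap.BilinForm R M}

theorem IsSymm.apply_add_self_of_charTwo (hB : B.IsSymm) (x y : M) :
    B (x + y) (x + y) = B x x + B y y := by
  simp only [map_add, LinearMap.add_apply, hB.eq y x]
  linear_combination CharTwo.add_self_eq_zero (B x y)

theorem IsSymm.exists_dual_sq_eq [PerfectRing R 2] (hB : B.IsSymm) :
    ∃ f : Dual R M, ∀ x, B x x = f x ^ 2 := by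
  let sqrt := (frobeniusEquiv R 2).symm
  refine ⟨{ toFun x := sqrt (B x x), map_add' := ?_, map_smul' := ?_ }, fun x => ?_⟩
  · intro x y
    rw [hB.apply_add_self_of_charTwo, map_add]
  · intro c x
    simp only [map_smul, smul_apply, smul_eq_mul, RingHom.id_apply, ← mul_assoc, ← sq, map_mul,
      sqrt, frobeniusEquiv_symm_pow]
  · exact (frobeniusEquiv_symm_pow_p R 2 _).symm

end LinearMap.BilinForm

open Set Function in
theorem Set.exists_bijOn_univ_of_rel {α β : Type*} [Finite α] {S : Set β} {R : α → β → Prop}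
    (hex : ∀ b ∈ S, ∃ a, R a b) (huniq : ∀ a, ∀ b ∈ S, ∀ b' ∈ S, R a b → R a b' → b = b')
    (hcard : S.ncard = Nat.card α) : ∃ C : α → β, BijOn C univ S ∧ ∀ a, R a (C a) := by
  choose lab hlab using fun b : S => hex b b.2
  have hinj : Injective lab := fun b b' h =>
    Subtype.ext (huniq _ b b.2 b' b'.2 (hlab b) (h ▸ hlab b'))
  let e := Equiv.ofBijective lab
    (hinj.bijective_of_nat_card_le (by rw [Nat.card_coe_set_eq, hcard]))
  refine ⟨Subtype.val ∘ e.symm, ?_, fun a => ?_⟩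
  · have hrange : range (Subtype.val ∘ e.symm) = S :=
      (e.symm.surjective.range_comp _).trans Subtype.range_coe
    have h := (Subtype.val_injective.comp e.symm.injective).bijOn_image (s := univ)
    rwa [image_univ, hrange] at h
  · simpa only [comp_apply, show lab (e.symm a) = a from e.apply_symm_apply a]
      using hlab (e.symm a)

section Operators

variable {F U : Type*} [Field F] [AddCommGroup U] [Module F U] {B : LinearMap.BilinForm F U}
  {L L' T : U →ₗ[F] U} {a b : U}

@[simp]
theorem Eop_apply (c x : U) : Eop B a c x = B x a • c := rfl

theorem isSkewOp_add_Eop_iff [CharP F 2] :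
    IsSkewOp B (L + Eop B a a) ↔ ∀ x, B x (L x) = B x a ^ 2 := by
  simp only [IsSkewOp, LinearMap.add_apply, map_add, Eop_apply, map_smul, smul_eq_mul, ← sq,
    CharTwo.add_eq_zero]

theorem IsSelfAdjOp.isSymm_compRight (hB : B.IsSymm) (hL : IsSelfAdjOp B L) :
    (B.compRight L).IsSymm :=
  ⟨fun x y => (hL x y).symm.trans (hB.eq (L x) y)⟩

theorem exists_isSkewOp_add_Eop [CharP F 2] [PerfectRing F 2] [FiniteDimensional F U]
    (hB : B.IsSymm) (hnd : B.Nondegenerate) (hL : IsSelfAdjOp B L) :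
    ∃ a, IsSkewOp B (L + Eop B a a) := by
  obtain ⟨f, hf⟩ := (hL.isSymm_compRight hB).exists_dual_sq_eq
  refine ⟨(B.toDual hnd).symm f, isSkewOp_add_Eop_iff.2 fun x => ?_⟩
  rw [hB.eq x ((B.toDual hnd).symm f), LinearMap.BilinForm.apply_toDual_symm_apply]
  exact hf x

theorem isSkewOp_add_Eop_add [CharP F 2] (hL : IsSkewOp B (L + Eop B a a))
    (hL' : IsSkewOp B (L' + Eop B b b)) : IsSkewOp B (L + L' + Eop B (a + b) (a + b)) := by
  rw [isSkewOp_add_Eop_iff] at *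
  intro x
  rw [LinearMap.add_apply, map_add, hL, hL', map_add, CharTwo.add_sq]

theorem isSkewOp_add_of_add_Eop [CharP F 2] (hL : IsSkewOp B (L + Eop B a a))
    (hL' : IsSkewOp B (L' + Eop B a a)) : IsSkewOp B (L + L') := by
  rw [isSkewOp_add_Eop_iff] at hL hL'
  intro x
  rw [LinearMap.add_apply, map_add, hL, hL', CharTwo.add_self_eq_zero]

theorem not_surjective_of_isSkewOp [FiniteDimensional F U] (hodd : Odd (finrank F U))
    (hnd : B.Nondegenerate) (hT : IsSkewOp B T) : ¬ Function.Surjective T := by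
  intro hsurj
  have hnd' : (B.compRight T).Nondegenerate :=
    .ofSeparatingLeft fun x hx => hnd.1 x fun z => by obtain ⟨y, rfl⟩ := hsurj z; exact hx y
  exact Nat.not_even_iff_odd.2 hodd (LinearMap.BilinForm.even_finrank_of_isAlt hnd' hT)

end Operators

theorem canonical_labeling_general
    (F U : Type*) [Field F] [Fintype F] [CharP F 2]
    [AddCommGroup U] [Module F U] [FiniteDimensional F U]
    (hodd : Odd (Module.finrank F U))
    (B : LinearMap.BilinForm F U) (hsymm : B.IsSymm) (hnd : B.Nondegenerate)
    (S : Set (U →ₗ[F] U))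
    (hcard : S.ncard = Fintype.card F ^ Module.finrank F U)
    (hsa : ∀ L ∈ S, IsSelfAdjOp B L)
    (hinv : ∀ L ∈ S, ∀ L' ∈ S, L ≠ L' → Function.Bijective (L + L')) :
    ∃ C : U → (U →ₗ[F] U),
      (Set.BijOn C Set.univ S ∧ ∀ a : U, IsSkewOp B (C a + Eop B a a)) ∧
      (∀ C' : U → (U →ₗ[F] U),
        Set.BijOn C' Set.univ S → (∀ a : U, IsSkewOp B (C' a + Eop B a a)) →
        C' = C) ∧
      ((∀ a b : U, C (a + b) = C a + C b) ↔ ∀ L ∈ S, ∀ L' ∈ S, L + L' ∈ S) := by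
  have : Finite U := Module.finite_of_finite F
  have hunique : ∀ a, ∀ L ∈ S, ∀ L' ∈ S, IsSkewOp B (L + Eop B a a) →
      IsSkewOp B (L' + Eop B a a) → L = L' := fun a L hL L' hL' h h' => by_contra fun hne =>
    not_surjective_of_isSkewOp hodd hnd (isSkewOp_add_of_add_Eop h h') (hinv L hL L' hL' hne).2
  obtain ⟨C, hbij, hskew⟩ :=
    Set.exists_bijOn_univ_of_rel (R := fun a L => IsSkewOp B (L + Eop B a a))
      (fun L hL => exists_isSkewOp_add_Eop hsymm hnd (hsa L hL)) hunique
      (by rw [hcard, Module.natCard_eq_pow_finrank (K := F), Nat.card_eq_fintype_card])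
  have hmem : ∀ a, C a ∈ S := fun a => hbij.mapsTo trivial
  refine ⟨C, ⟨hbij, hskew⟩, fun C' hC' hskew' => funext fun a =>
    hunique a _ (hC'.mapsTo trivial) _ (hmem a) (hskew' a) (hskew a),
    fun hadd L hL L' hL' => ?_, fun hclosed a b => ?_⟩
  · obtain ⟨a, -, rfl⟩ := hbij.surjOn hL
    obtain ⟨b, -, rfl⟩ := hbij.surjOn hL'
    exact hadd a b ▸ hmem (a + b)
  · exact hunique (a + b) _ (hmem _) _ (hclosed _ (hmem a) _ (hmem b)) (hskew _)
      (isSkewOp_add_Eop_add (hskew a) (hskew b))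

/-- Canonical labeling of a symplectic spread-set: there is a unique bijection
`C : U → S` such that `C a + E_{a,a}` is skew-symmetric for all `a`, and `C`
is additive iff `S` is additively closed. -/
theorem canonical_labeling
    (F U : Type*) [Field F] [Fintype F] [CharP F 2]
    [AddCommGroup U] [Module F U] [FiniteDimensional F U]
    (hodd : Odd (Module.finrank F U))
    (B : LinearMap.BilinForm F U) (hsymm : B.IsSymm) (hnd : B.Nondegenerate)
    (S : Set (U →ₗ[F] U)) (h0 : 0 ∈ S)
    (hcard : S.ncard = Fintype.card F ^ Module.finrank F U)
    (hsa : ∀ L ∈ S, IsSelfAdjOp B L)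
    (hinv : ∀ L ∈ S, ∀ L' ∈ S, L ≠ L' → Function.Bijective (L + L')) :
    ∃ C : U → (U →ₗ[F] U),
      (Set.BijOn C Set.univ S ∧ ∀ a : U, IsSkewOp B (C a + Eop B a a)) ∧
      (∀ C' : U → (U →ₗ[F] U),
        Set.BijOn C' Set.univ S → (∀ a : U, IsSkewOp B (C' a + Eop B a a)) →
        C' = C) ∧
      ((∀ a b : U, C (a + b) = C a + C b) ↔ ∀ L ∈ S, ∀ L' ∈ S, L + L' ∈ S) :=
  canonical_labeling_general F U hodd B hsymm hnd S hcard hsa hinv
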